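/- arXiv:1404.6592 — 3 statements merged into one kernel-verified Lean document; each statement's English description precedes it below -/
import Mathlib

section
/- Let A, B, C be unit vectors in ℝ³ with A·B > -1, B·C > -1, C·A > -1, and let D, E, F be the normalized midpoints D = (A+B)/√(2(1+A·B)), E = (B+C)/√(2(1+B·C)), F = (C+A)/√(2(1+C·A)). Then the Euler numerator satisfies (1 + A·B + B·C + C·A)² / (2(1+A·B)(1+B·C)(1+C·A)) = (E·F)² + (F·D)² + (D·E)² - 2(E·F)(F·D)(D·E). -/
open Matrix

set_option maxHeartbeats 1000000

theorem euler_medial_identity (A B C D E F : Fin 3 → ℝ)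
    (hA : A ⬝ᵥ A = 1) (hB : B ⬝ᵥ B = 1) (hC : C ⬝ᵥ C = 1)
    (hAB : A ⬝ᵥ B > -1) (hBC : B ⬝ᵥ C > -1) (hCA : C ⬝ᵥ A > -1)
    (hD : D = (Real.sqrt (2 * (1 + A ⬝ᵥ B)))⁻¹ • (A + B))
    (hE : E = (Real.sqrt (2 * (1 + B ⬝ᵥ C)))⁻¹ • (B + C))
    (hF : F = (Real.sqrt (2 * (1 + C ⬝ᵥ A)))⁻¹ • (C + A)) :
    (1 + A ⬝ᵥ B + B ⬝ᵥ C + C ⬝ᵥ A) ^ 2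
        / (2 * (1 + A ⬝ᵥ B) * (1 + B ⬝ᵥ C) * (1 + C ⬝ᵥ A))
      = (E ⬝ᵥ F) ^ 2 + (F ⬝ᵥ D) ^ 2 + (D ⬝ᵥ E) ^ 2
          - 2 * (E ⬝ᵥ F) * (F ⬝ᵥ D) * (D ⬝ᵥ E) := by
  set p := A ⬝ᵥ B with hp
  set q := B ⬝ᵥ C with hq
  set r := C ⬝ᵥ A with hr
  have hBA : B ⬝ᵥ A = p := by rw [hp, dotProduct_comm]
  have hCB : C ⬝ᵥ B = q := by rw [hq, dotProduct_comm]
  have hAC : A ⬝ᵥ C = r := by rw [hr, dotProduct_comm]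
  have hp0 : (0:ℝ) < 2 * (1 + p) := by linarith
  have hq0 : (0:ℝ) < 2 * (1 + q) := by linarith
  have hr0 : (0:ℝ) < 2 * (1 + r) := by linarith
  have sp : Real.sqrt (2 * (1 + p)) ^ 2 = 2 * (1 + p) := Real.sq_sqrt hp0.le
  have sq : Real.sqrt (2 * (1 + q)) ^ 2 = 2 * (1 + q) := Real.sq_sqrt hq0.le
  have sr : Real.sqrt (2 * (1 + r)) ^ 2 = 2 * (1 + r) := Real.sq_sqrt hr0.le
  have spne : Real.sqrt (2 * (1 + p)) ≠ 0 := by positivity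
  have sqne : Real.sqrt (2 * (1 + q)) ≠ 0 := by positivity
  have srne : Real.sqrt (2 * (1 + r)) ≠ 0 := by positivity
  have hEF : E ⬝ᵥ F = (1 + p + q + r) /
      (Real.sqrt (2 * (1 + q)) * Real.sqrt (2 * (1 + r))) := by
    rw [hE, hF]
    simp only [smul_dotProduct, dotProduct_smul, add_dotProduct, dotProduct_add,
      ← hp, ← hq, ← hr, hBA, hCB, hAC, hA, hB, hC, smul_eq_mul]
    field_simp
    ring
  have hFD : F ⬝ᵥ D = (1 + p + q + r) /
      (Real.sqrt (2 * (1 + r)) * Real.sqrt (2 * (1 + p))) := by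
    rw [hF, hD]
    simp only [smul_dotProduct, dotProduct_smul, add_dotProduct, dotProduct_add,
      ← hp, ← hq, ← hr, hBA, hCB, hAC, hA, hB, hC, smul_eq_mul]
    field_simp
    ring
  have hDE : D ⬝ᵥ E = (1 + p + q + r) /
      (Real.sqrt (2 * (1 + p)) * Real.sqrt (2 * (1 + q))) := by
    rw [hD, hE]
    simp only [smul_dotProduct, dotProduct_smul, add_dotProduct, dotProduct_add,
      ← hp, ← hq, ← hr, hBA, hCB, hAC, hA, hB, hC, smul_eq_mul]
    field_simp
    ring
  have e1 : (E ⬝ᵥ F) ^ 2 = (1 + p + q + r) ^ 2 / ((2 * (1 + q)) * (2 * (1 + r))) := by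
    rw [hEF, div_pow, mul_pow, sq, sr]
  have e2 : (F ⬝ᵥ D) ^ 2 = (1 + p + q + r) ^ 2 / ((2 * (1 + r)) * (2 * (1 + p))) := by
    rw [hFD, div_pow, mul_pow, sr, sp]
  have e3 : (D ⬝ᵥ E) ^ 2 = (1 + p + q + r) ^ 2 / ((2 * (1 + p)) * (2 * (1 + q))) := by
    rw [hDE, div_pow, mul_pow, sp, sq]
  have e4 : (E ⬝ᵥ F) * (F ⬝ᵥ D) * (D ⬝ᵥ E)
      = (1 + p + q + r) ^ 3 / ((2 * (1 + p)) * (2 * (1 + q)) * (2 * (1 + r))) := by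
    rw [hEF, hFD, hDE, div_mul_div_comm, div_mul_div_comm]
    congr 1
    · ring
    · rw [show Real.sqrt (2 * (1 + q)) * Real.sqrt (2 * (1 + r)) *
          (Real.sqrt (2 * (1 + r)) * Real.sqrt (2 * (1 + p))) *
          (Real.sqrt (2 * (1 + p)) * Real.sqrt (2 * (1 + q)))
          = Real.sqrt (2 * (1 + p)) ^ 2 * Real.sqrt (2 * (1 + q)) ^ 2 *
            Real.sqrt (2 * (1 + r)) ^ 2 from by ring, sp, sq, sr]
  rw [e1, e2, e3]
  rw [show 2 * E ⬝ᵥ F * F ⬝ᵥ D * D ⬝ᵥ E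
      = 2 * (E ⬝ᵥ F * F ⬝ᵥ D * D ⬝ᵥ E) from by ring, e4]
  have h1 : (1 + p) ≠ 0 := by linarith
  have h2 : (1 + q) ≠ 0 := by linarith
  have h3 : (1 + r) ≠ 0 := by linarith
  field_simp
  ring
end

section
/- Let A, B, C be unit vectors in ℝ³ with A·B > -1, B·C > -1, C·A > -1 and det M(A,B,C) > 0. Then the quantity T = det M(A,B,C)/√(2(1+A·B)(1+B·C)(1+C·A)) satisfies 0 < T ≤ 1. -/
/-! The Gram identity `det M(A,B,C)² = det (Mᵀ M)` gives, for unit vectors with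
`a = A·B`, `b = B·C`, `c = C·A`, `det² = 1 + 2abc - a² - b² - c²`, and
`2(1+a)(1+b)(1+c)` exceeds this by exactly `(1+a+b+c)²`. -/

open Matrix

/-- The 3×3 matrix whose columns are the vectors A, B, C. -/
def colMat (A B C : Fin 3 → ℝ) : Matrix (Fin 3) (Fin 3) ℝ :=
  Matrix.of fun i j => ![A, B, C] j i

theorem colMat_transpose_mul_self (A B C : Fin 3 → ℝ) :
    (colMat A B C)ᵀ * colMat A B C = Matrix.of fun i j => ![A, B, C] i ⬝ᵥ ![A, B, C] j := by
  ext i j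
  simp [Matrix.mul_apply, dotProduct, colMat]

theorem det_colMat_sq (A B C : Fin 3 → ℝ) :
    (colMat A B C).det ^ 2 = (Matrix.of fun i j => ![A, B, C] i ⬝ᵥ ![A, B, C] j).det := by
  rw [← colMat_transpose_mul_self, det_mul, det_transpose, sq]

theorem det_colMat_sq_of_unit (A B C : Fin 3 → ℝ)
    (hA : A ⬝ᵥ A = 1) (hB : B ⬝ᵥ B = 1) (hC : C ⬝ᵥ C = 1) :
    (colMat A B C).det ^ 2 =
      1 + 2 * (A ⬝ᵥ B) * (B ⬝ᵥ C) * (C ⬝ᵥ A) - (A ⬝ᵥ B) ^ 2 - (B ⬝ᵥ C) ^ 2 - (C ⬝ᵥ A) ^ 2 := by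
  rw [det_colMat_sq, det_fin_three]
  simp only [of_apply, cons_val_zero, cons_val_one, cons_val_two, head_cons, tail_cons,
    hA, hB, hC, dotProduct_comm B A, dotProduct_comm C B, dotProduct_comm A C]
  ring

theorem det_colMat_sq_le (A B C : Fin 3 → ℝ)
    (hA : A ⬝ᵥ A = 1) (hB : B ⬝ᵥ B = 1) (hC : C ⬝ᵥ C = 1) :
    (colMat A B C).det ^ 2 ≤ 2 * (1 + A ⬝ᵥ B) * (1 + B ⬝ᵥ C) * (1 + C ⬝ᵥ A) := by
  rw [det_colMat_sq_of_unit A B C hA hB hC]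
  nlinarith [sq_nonneg (1 + A ⬝ᵥ B + B ⬝ᵥ C + C ⬝ᵥ A)]

theorem tuynman_ratio_mem_Ioc (A B C : Fin 3 → ℝ)
    (hA : A ⬝ᵥ A = 1) (hB : B ⬝ᵥ B = 1) (hC : C ⬝ᵥ C = 1)
    (hAB : A ⬝ᵥ B > -1) (hBC : B ⬝ᵥ C > -1) (hCA : C ⬝ᵥ A > -1)
    (hdet : (colMat A B C).det > 0) :
    0 < (colMat A B C).det /
          Real.sqrt (2 * (1 + A ⬝ᵥ B) * (1 + B ⬝ᵥ C) * (1 + C ⬝ᵥ A)) ∧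
    (colMat A B C).det /
          Real.sqrt (2 * (1 + A ⬝ᵥ B) * (1 + B ⬝ᵥ C) * (1 + C ⬝ᵥ A)) ≤ 1 := by
  have hprod : 0 < 2 * (1 + A ⬝ᵥ B) * (1 + B ⬝ᵥ C) * (1 + C ⬝ᵥ A) := by
    have : 0 < 1 + A ⬝ᵥ B := by linarith
    have : 0 < 1 + B ⬝ᵥ C := by linarith
    have : 0 < 1 + C ⬝ᵥ A := by linarith
    positivity
  have hsqrt := Real.sqrt_pos.mpr hprod
  refine ⟨div_pos hdet hsqrt, (div_le_one hsqrt).mpr ?_⟩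
  exact (Real.le_sqrt hdet.le hprod.le).mpr (det_colMat_sq_le A B C hA hB hC)
end

section
/- Let S_A: S² → ℝ be a smooth function on an open subset of the unit sphere satisfying cos(S_A(X)/2) = (1 + B·C + (B+C)·X)/√(f_A(X)) and sin(S_A(X)/2) = det M(B,C,X)/√(f_A(X)), where f_A(X) = 2(1+B·C)(1+B·X)(1+C·X) and B, C are fixed unit vectors. Then for any tangent vector v to S² at X, -det M(B,C,X) · dS_A(v) = [1 - C·(X+B)/(1+B·X)]·(B·v) + [1 - B·(X+C)/(1+C·X)]·(C·v). -/
open Matrix Filter Topology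

/-- `f_A(X) = 2(1 + B·C)(1 + B·X)(1 + C·X)`. -/
def fA (B C X : Fin 3 → ℝ) : ℝ := 2 * (1 + B ⬝ᵥ C) * (1 + B ⬝ᵥ X) * (1 + C ⬝ᵥ X)

/-! Differentiating the Euler formula `cos (S_A/2) = N/√f_A` along a curve `γ` through `X`
gives `-sin (S_A/2) · S_A'/2 = (N'·√f_A - N·f_A'/(2√f_A)) / f_A`; Tuynman's formula
`sin (S_A/2) = det/√f_A` turns this into `-det · S_A' = 2N' - N·f_A'/f_A`, and
`f_A'/f_A = B·v/(1 + B·X) + C·v/(1 + C·X)` is a logarithmic derivative. -/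

lemma hasDerivAt_dotProduct {ι : Type*} [Fintype ι] (w : ι → ℝ) {γ : ℝ → ι → ℝ}
    {v : ι → ℝ} {t : ℝ} (h : HasDerivAt γ v t) :
    HasDerivAt (fun s => w ⬝ᵥ γ s) (w ⬝ᵥ v) t := by
  simp only [dotProduct]
  exact HasDerivAt.fun_sum fun i _ => ((hasDerivAt_pi.mp h) i).const_mul (w i)

lemma hasDerivAt_fA (B C : Fin 3 → ℝ) {γ : ℝ → Fin 3 → ℝ} {v : Fin 3 → ℝ} {t : ℝ}
    (h : HasDerivAt γ v t) :
    HasDerivAt (fun s => fA B C (γ s))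
      (2 * (1 + B ⬝ᵥ C) * ((B ⬝ᵥ v) * (1 + C ⬝ᵥ γ t) + (1 + B ⬝ᵥ γ t) * (C ⬝ᵥ v))) t := by
  have hB := (hasDerivAt_dotProduct B h).const_add 1
  have hC := (hasDerivAt_dotProduct C h).const_add 1
  have hfun : (fun s => fA B C (γ s)) =
      fun s => 2 * (1 + B ⬝ᵥ C) * ((1 + B ⬝ᵥ γ s) * (1 + C ⬝ᵥ γ s)) := by
    funext s
    simp only [fA]
    ring
  rw [hfun]
  exact (hB.mul hC).const_mul _

lemma pos_of_cos_sin_eq_div_sqrt {θ a b F : ℝ} (hcos : Real.cos θ = a / √F)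
    (hsin : Real.sin θ = b / √F) : 0 < F := by
  refine Real.sqrt_ne_zero'.mp fun h0 => ?_
  have := Real.sin_sq_add_cos_sq θ
  rw [hcos, hsin, h0, div_zero, div_zero] at this
  norm_num at this

lemma neg_mul_deriv_of_cos_half_eq_div_sqrt {g N F : ℝ → ℝ} {t₀ N' F' D : ℝ}
    (hg : DifferentiableAt ℝ g t₀) (hN : HasDerivAt N N' t₀) (hF : HasDerivAt F F' t₀)
    (hcos : ∀ᶠ t in 𝓝 t₀, Real.cos (g t / 2) = N t / √(F t))
    (hsin : Real.sin (g t₀ / 2) = D / √(F t₀)) :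
    -D * deriv g t₀ = 2 * N' - N t₀ * F' / F t₀ := by
  have hFpos : 0 < F t₀ := pos_of_cos_sin_eq_div_sqrt hcos.self_of_nhds hsin
  have hs : 0 < √(F t₀) := Real.sqrt_pos.mpr hFpos
  have hquot := hN.div (hF.sqrt hFpos.ne') hs.ne'
  have hchain := (hg.hasDerivAt.div_const 2).cos
  have hkey := hchain.unique (hquot.congr_of_eventuallyEq hcos)
  rw [hsin] at hkey
  have hsq : √(F t₀) ^ 2 = F t₀ := Real.sq_sqrt hFpos.le
  field_simp at hkey
  rw [← hsq]
  field_simp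
  linear_combination hkey

lemma eventually_one_add_dotProduct_pos {ι : Type*} [Fintype ι] (w : ι → ℝ)
    {γ : ℝ → ι → ℝ} {t₀ : ℝ} (hγ : ContinuousAt γ t₀) (h : 0 < 1 + w ⬝ᵥ γ t₀) :
    ∀ᶠ t in 𝓝 t₀, 0 < 1 + w ⬝ᵥ γ t :=
  ((continuous_const.add (continuous_const.dotProduct continuous_id)).continuousAt.comp hγ
    |>.eventually_mem (Ioi_mem_nhds h))

theorem dSA_formula_general (B C X v : Fin 3 → ℝ) (SA : (Fin 3 → ℝ) → ℝ) (γ : ℝ → Fin 3 → ℝ)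
    (hX : X ⬝ᵥ X = 1)
    (hBX : 1 + B ⬝ᵥ X > 0) (hCX : 1 + C ⬝ᵥ X > 0)
    -- `SA` satisfies the Euler and Tuynman formulas on the sphere near X
    (hEq : ∀ Y : Fin 3 → ℝ, Y ⬝ᵥ Y = 1 → 1 + B ⬝ᵥ Y > 0 → 1 + C ⬝ᵥ Y > 0 →
      Real.cos (SA Y / 2) = (1 + B ⬝ᵥ C + (B + C) ⬝ᵥ Y) / Real.sqrt (fA B C Y) ∧
      Real.sin (SA Y / 2) = (colMat B C Y).det / Real.sqrt (fA B C Y))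
    -- γ is a curve on the sphere through X with velocity v at t = 0
    (hγ0 : γ 0 = X) (hsph : ∀ t, γ t ⬝ᵥ γ t = 1)
    (hγ : HasDerivAt γ v 0)
    (hdiff : DifferentiableAt ℝ (fun t => SA (γ t)) 0) :
    -(colMat B C X).det * deriv (fun t => SA (γ t)) 0 =
      (1 - C ⬝ᵥ (X + B) / (1 + B ⬝ᵥ X)) * (B ⬝ᵥ v)
        + (1 - B ⬝ᵥ (X + C) / (1 + C ⬝ᵥ X)) * (C ⬝ᵥ v) := by
  have hcos : ∀ᶠ t in 𝓝 0, Real.cos (SA (γ t) / 2) =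
      (1 + B ⬝ᵥ C + (B + C) ⬝ᵥ γ t) / √(fA B C (γ t)) := by
    filter_upwards [eventually_one_add_dotProduct_pos B hγ.continuousAt (hγ0 ▸ hBX),
      eventually_one_add_dotProduct_pos C hγ.continuousAt (hγ0 ▸ hCX)] with t hBt hCt
    exact (hEq (γ t) (hsph t) hBt hCt).1
  obtain ⟨hcosX, hsinX⟩ := hEq X hX hBX hCX
  have hsin : Real.sin (SA (γ 0) / 2) = (colMat B C X).det / √(fA B C (γ 0)) := by
    rwa [hγ0]
  have hFpos : 0 < fA B C X := pos_of_cos_sin_eq_div_sqrt hcosX hsinX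
  have hBC : 1 + B ⬝ᵥ C ≠ 0 := by
    rintro h
    simp [fA, h] at hFpos
  rw [neg_mul_deriv_of_cos_half_eq_div_sqrt hdiff
    ((hasDerivAt_dotProduct (B + C) hγ).const_add (1 + B ⬝ᵥ C)) (hasDerivAt_fA B C hγ) hcos hsin,
    hγ0]
  simp only [fA, add_dotProduct, dotProduct_add, dotProduct_comm C B]
  field_simp
  ring

/-- Differentiating the spherical-triangle area `S_A` with respect to the vertex `X`
along any curve on the sphere through `X` with velocity `v`. -/
theorem dSA_formula (B C X v : Fin 3 → ℝ) (SA : (Fin 3 → ℝ) → ℝ) (γ : ℝ → Fin 3 → ℝ)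
    (hB : B ⬝ᵥ B = 1) (hC : C ⬝ᵥ C = 1) (hX : X ⬝ᵥ X = 1)
    (hBX : 1 + B ⬝ᵥ X > 0) (hCX : 1 + C ⬝ᵥ X > 0)
    (hdet : (colMat B C X).det ≠ 0)
    -- `SA` satisfies the Euler and Tuynman formulas on the sphere near X
    (hEq : ∀ Y : Fin 3 → ℝ, Y ⬝ᵥ Y = 1 → 1 + B ⬝ᵥ Y > 0 → 1 + C ⬝ᵥ Y > 0 →
      Real.cos (SA Y / 2) = (1 + B ⬝ᵥ C + (B + C) ⬝ᵥ Y) / Real.sqrt (fA B C Y) ∧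
      Real.sin (SA Y / 2) = (colMat B C Y).det / Real.sqrt (fA B C Y))
    -- γ is a curve on the sphere through X with velocity v at t = 0
    (hγ0 : γ 0 = X) (hsph : ∀ t, γ t ⬝ᵥ γ t = 1)
    (hγ : HasDerivAt γ v 0)
    (hdiff : DifferentiableAt ℝ (fun t => SA (γ t)) 0) :
    -(colMat B C X).det * deriv (fun t => SA (γ t)) 0 =
      (1 - C ⬝ᵥ (X + B) / (1 + B ⬝ᵥ X)) * (B ⬝ᵥ v)
        + (1 - B ⬝ᵥ (X + C) / (1 + C ⬝ᵥ X)) * (C ⬝ᵥ v) :=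
  dSA_formula_general B C X v SA γ hX hBX hCX hEq hγ0 hsph hγ hdiff
end
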